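/- arXiv:2505.21401 — 9 statements merged into one kernel-verified Lean document; each statement's English description precedes it below -/
import Mathlib

section
/- There is no homeomorphism h : ℝⁿ → ℝⁿ with h(0) = 0 such that h(φ₁(t,x)) = e^{-t}h(x) for all t ≥ 0 and all x ∈ ℝⁿ, where φ₁(t,x) = (1 - t/‖x‖₂)x for t ≤ ‖x‖₂ (x ≠ 0) and φ₁(t,x) = 0 otherwise. -/
noncomputable def phi1 (n : ℕ) (t : ℝ) (x : EuclideanSpace ℝ (Fin n)) :
    EuclideanSpace ℝ (Fin n) :=
  if t ≤ ‖x‖ then (1 - t / ‖x‖) • x else 0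

theorem no_global_conjugacy_to_linear_flow (n : ℕ) (hn : 1 ≤ n) :
    ¬ ∃ h : Homeomorph (EuclideanSpace ℝ (Fin n)) (EuclideanSpace ℝ (Fin n)),
      h 0 = 0 ∧
      ∀ t : ℝ, 0 ≤ t → ∀ x : EuclideanSpace ℝ (Fin n),
        h (phi1 n t x) = Real.exp (-t) • h x := by
  rintro ⟨h, h0, hconj⟩
  set x : EuclideanSpace ℝ (Fin n) := EuclideanSpace.single ⟨0, hn⟩ (1 : ℝ) with hx
  have hnorm : ‖x‖ = 1 := by simp [hx, EuclideanSpace.norm_single]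
  have hphi : phi1 n 1 x = 0 := by
    simp [phi1, hnorm]
  have := hconj 1 zero_le_one x
  rw [hphi, h0] at this
  have hhx : h x = 0 := by
    have hexp : Real.exp (-1) ≠ 0 := Real.exp_ne_zero _
    have := this.symm
    rcases smul_eq_zero.mp this with h1 | h2
    · exact absurd h1 hexp
    · exact h2
  have hx0 : x = 0 := by
    have : h x = h 0 := by rw [hhx, h0]
    exact h.injective this
  rw [hx0] at hnorm
  simp at hnorm
end

section
/- For any r > 0, the map h_r : ℝⁿ → ℝⁿ defined by h_r(x) = r·e^{τ'(x)}·x/‖x‖₂ for x ≠ 0 and h_r(0) = 0, where τ'(x) = ‖x‖₂ - 1 for ‖x‖₂ ≥ 1 and τ'(x) = ln(‖x‖₂²) for ‖x‖₂ < 1, is a homeomorphism of ℝⁿ. -/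
noncomputable def tau' (n : ℕ) (x : EuclideanSpace ℝ (Fin n)) : ℝ :=
  if 1 ≤ ‖x‖ then ‖x‖ - 1 else Real.log (‖x‖ ^ 2)

open Classical in
noncomputable def hr (n : ℕ) (r : ℝ) (x : EuclideanSpace ℝ (Fin n)) :
    EuclideanSpace ℝ (Fin n) :=
  if x = 0 then 0 else (r * Real.exp (tau' n x) / ‖x‖) • x

open Classical in
noncomputable def hrInv (n : ℕ) (r : ℝ) (y : EuclideanSpace ℝ (Fin n)) :
    EuclideanSpace ℝ (Fin n) :=
  if y = 0 then 0 else
    ((if r ≤ ‖y‖ then Real.log (‖y‖ / r) + 1 else Real.sqrt (‖y‖ / r)) / ‖y‖) • y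

section Aux

open Classical

variable {n : ℕ} {r : ℝ}

lemma hr_zero : hr n r 0 = 0 := by simp [hr]

lemma hrInv_zero : hrInv n r 0 = 0 := by simp [hrInv]

lemma norm_hr (hrpos : 0 < r) {x : EuclideanSpace ℝ (Fin n)} (hx : x ≠ 0) :
    ‖hr n r x‖ = r * Real.exp (tau' n x) := by
  have hnx : (0:ℝ) < ‖x‖ := norm_pos_iff.mpr hx
  rw [hr, if_neg hx, norm_smul, Real.norm_eq_abs,
    abs_of_pos (by positivity)]
  field_simp

lemma exp_tau'_of_lt {x : EuclideanSpace ℝ (Fin n)} (hx : x ≠ 0) (h1 : ‖x‖ < 1) :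
    Real.exp (tau' n x) = ‖x‖ ^ 2 := by
  have hnx : (0:ℝ) < ‖x‖ := norm_pos_iff.mpr hx
  rw [tau', if_neg (not_le.mpr h1), Real.exp_log (by positivity)]

lemma hr_eq (hrpos : 0 < r) :
    hr n r = fun x : EuclideanSpace ℝ (Fin n) =>
      if 1 ≤ ‖x‖ then (r * Real.exp (‖x‖ - 1) / ‖x‖) • x else (r * ‖x‖) • x := by
  funext x
  by_cases hx : x = 0
  · subst hx; simp [hr]
  · have hnx : (0:ℝ) < ‖x‖ := norm_pos_iff.mpr hx
    rw [hr, if_neg hx]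
    by_cases h1 : 1 ≤ ‖x‖
    · rw [if_pos h1, tau', if_pos h1]
    · rw [if_neg h1, exp_tau'_of_lt hx (not_le.mp h1)]
      congr 1
      field_simp

lemma continuous_hr (hrpos : 0 < r) : Continuous (hr n r) := by
  rw [hr_eq hrpos]
  apply continuous_if_le (continuous_const) (continuous_norm)
  · apply ContinuousOn.fun_smul
    · apply ContinuousOn.div
      · exact (continuous_const.mul (Real.continuous_exp.comp
          (continuous_norm.sub continuous_const))).continuousOn
      · exact continuous_norm.continuousOn
      · intro x hx
        have : (1:ℝ) ≤ ‖x‖ := hx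
        positivity
    · exact continuous_id.continuousOn
  · exact ((continuous_const.mul continuous_norm).smul continuous_id).continuousOn
  · intro x hx
    simp only [← hx]
    norm_num

lemma continuousAt_if_le' {α β : Type*} [TopologicalSpace α] [TopologicalSpace β]
    {f g : α → ℝ} {f' g' : α → β} {a : α} [∀ x, Decidable (f x ≤ g x)]
    (hf' : ContinuousAt f' a) (hg' : ContinuousAt g' a) (heq : f' a = g' a)
    (hbr : f a ≤ g a) :
    ContinuousAt (fun x => if f x ≤ g x then f' x else g' x) a := by
  have : Filter.Tendsto (fun x => if f x ≤ g x then f' x else g' x) (nhds a)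
      (nhds (f' a)) := by
    rw [Filter.tendsto_def]
    intro s hs
    filter_upwards [hf' hs, hg' (heq ▸ hs)] with x h1 h2
    rw [Set.mem_preimage]
    split_ifs <;> assumption
  simpa [ContinuousAt, if_pos hbr] using this

lemma continuousAt_scalarInv (hrpos : 0 < r) {y : EuclideanSpace ℝ (Fin n)} (hy : y ≠ 0) :
    ContinuousAt (fun z : EuclideanSpace ℝ (Fin n) =>
      if r ≤ ‖z‖ then Real.log (‖z‖ / r) + 1 else Real.sqrt (‖z‖ / r)) y := by
  have hny : (0:ℝ) < ‖y‖ := norm_pos_iff.mpr hy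
  have hlog : ContinuousAt (fun z : EuclideanSpace ℝ (Fin n) =>
      Real.log (‖z‖ / r) + 1) y := by
    apply ContinuousAt.add _ continuousAt_const
    exact ContinuousAt.comp (Real.continuousAt_log (by positivity))
      ((continuous_norm.div_const r).continuousAt)
  have hsqrt : ContinuousAt (fun z : EuclideanSpace ℝ (Fin n) =>
      Real.sqrt (‖z‖ / r)) y :=
    (Real.continuous_sqrt.comp (continuous_norm.div_const r)).continuousAt
  rcases lt_trichotomy ‖y‖ r with h | h | h
  · have hev : ∀ᶠ z : EuclideanSpace ℝ (Fin n) in nhds y, ‖z‖ < r :=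
      (continuous_norm.continuousAt).eventually_lt continuousAt_const h
    apply hsqrt.congr
    filter_upwards [hev] with z hz
    rw [if_neg (not_le.mpr hz)]
  · exact continuousAt_if_le' hlog hsqrt (by rw [h]; simp [div_self hrpos.ne']) (le_of_eq h.symm)
  · have hev : ∀ᶠ z : EuclideanSpace ℝ (Fin n) in nhds y, r < ‖z‖ :=
      continuousAt_const.eventually_lt (continuous_norm.continuousAt) h
    apply hlog.congr
    filter_upwards [hev] with z hz
    rw [if_pos hz.le]

lemma continuous_hrInv (hrpos : 0 < r) : Continuous (hrInv n r : EuclideanSpace ℝ (Fin n) → _) := by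
  rw [continuous_iff_continuousAt]
  intro y
  by_cases hy : y = 0
  · subst hy
    rw [ContinuousAt, hrInv_zero]
    apply squeeze_zero_norm' (a := fun z => Real.sqrt (‖z‖ / r))
    · have hev : ∀ᶠ z : EuclideanSpace ℝ (Fin n) in nhds 0, ‖z‖ < r := by
        have : ContinuousAt (fun z : EuclideanSpace ℝ (Fin n) => ‖z‖) 0 :=
          continuous_norm.continuousAt
        simpa using this.eventually_lt continuousAt_const (by simpa using hrpos)
      filter_upwards [hev] with z hz
      by_cases hz0 : z = 0
      · simp [hz0, hrInv_zero]
      · have hnz : (0:ℝ) < ‖z‖ := norm_pos_iff.mpr hz0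
        rw [hrInv, if_neg hz0, if_neg (not_le.mpr hz), norm_smul, Real.norm_eq_abs,
          abs_of_nonneg (by positivity)]
        rw [div_mul_cancel₀]
        exact hnz.ne'
    · have : Filter.Tendsto (fun z : EuclideanSpace ℝ (Fin n) => Real.sqrt (‖z‖ / r))
          (nhds 0) (nhds (Real.sqrt (‖(0 : EuclideanSpace ℝ (Fin n))‖ / r))) :=
        (Real.continuous_sqrt.comp (continuous_norm.div_const r)).continuousAt
      simpa using this
  · have hny : (0:ℝ) < ‖y‖ := norm_pos_iff.mpr hy
    have hev : ∀ᶠ z : EuclideanSpace ℝ (Fin n) in nhds y, z ≠ 0 :=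
      eventually_ne_nhds hy
    have hcont : ContinuousAt (fun z : EuclideanSpace ℝ (Fin n) =>
        ((if r ≤ ‖z‖ then Real.log (‖z‖ / r) + 1 else Real.sqrt (‖z‖ / r)) / ‖z‖) • z) y := by
      apply ContinuousAt.fun_smul
      · exact (continuousAt_scalarInv hrpos hy).div continuous_norm.continuousAt hny.ne'
      · exact continuousAt_id
    apply hcont.congr
    filter_upwards [hev] with z hz
    rw [hrInv, if_neg hz]

lemma scalar_hr (hrpos : 0 < r) {x : EuclideanSpace ℝ (Fin n)} (hx : x ≠ 0) :
    (if r ≤ ‖hr n r x‖ then Real.log (‖hr n r x‖ / r) + 1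
      else Real.sqrt (‖hr n r x‖ / r)) = ‖x‖ := by
  have hnx : (0:ℝ) < ‖x‖ := norm_pos_iff.mpr hx
  rw [norm_hr hrpos hx]
  by_cases h1 : 1 ≤ ‖x‖
  · rw [tau', if_pos h1]
    have hge : r ≤ r * Real.exp (‖x‖ - 1) := by
      nlinarith [Real.one_le_exp (by linarith : (0:ℝ) ≤ ‖x‖ - 1)]
    rw [if_pos hge, mul_div_cancel_left₀ _ hrpos.ne', Real.log_exp]
    ring
  · push_neg at h1
    rw [exp_tau'_of_lt hx h1]
    have hsq : ‖x‖ ^ 2 < 1 := by nlinarith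
    have hlt : r * ‖x‖ ^ 2 < r := by nlinarith
    rw [if_neg (not_le.mpr hlt), mul_div_cancel_left₀ _ hrpos.ne',
      Real.sqrt_sq hnx.le]

lemma hr_ne_zero (hrpos : 0 < r) {x : EuclideanSpace ℝ (Fin n)} (hx : x ≠ 0) :
    hr n r x ≠ 0 := by
  intro h
  have h1 := norm_hr hrpos hx
  rw [h, norm_zero] at h1
  have h2 : 0 < r * Real.exp (tau' n x) := by positivity
  linarith

lemma left_inv (hrpos : 0 < r) (x : EuclideanSpace ℝ (Fin n)) :
    hrInv n r (hr n r x) = x := by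
  by_cases hx : x = 0
  · subst hx; rw [hr_zero, hrInv_zero]
  · have hnx : (0:ℝ) < ‖x‖ := norm_pos_iff.mpr hx
    have hhr : hr n r x ≠ 0 := hr_ne_zero hrpos hx
    rw [hrInv, if_neg hhr, scalar_hr hrpos hx]
    conv_lhs => rw [hr, if_neg hx]
    rw [smul_smul]
    have hnhr : ‖hr n r x‖ = r * Real.exp (tau' n x) := norm_hr hrpos hx
    rw [hr, if_neg hx] at hnhr
    rw [hnhr]
    have hpos : (0:ℝ) < r * Real.exp (tau' n x) := by positivity
    rw [show ‖x‖ / (r * Real.exp (tau' n x)) * (r * Real.exp (tau' n x) / ‖x‖) = 1 by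
      field_simp]
    simp

lemma right_inv (hrpos : 0 < r) (y : EuclideanSpace ℝ (Fin n)) :
    hr n r (hrInv n r y) = y := by
  by_cases hy : y = 0
  · subst hy; rw [hrInv_zero, hr_zero]
  · have hny : (0:ℝ) < ‖y‖ := norm_pos_iff.mpr hy
    set g : ℝ := if r ≤ ‖y‖ then Real.log (‖y‖ / r) + 1 else Real.sqrt (‖y‖ / r) with hg
    have hgpos : 0 < g := by
      rw [hg]
      by_cases h : r ≤ ‖y‖
      · rw [if_pos h]
        have : (0:ℝ) ≤ Real.log (‖y‖ / r) :=
          Real.log_nonneg ((one_le_div hrpos).mpr h)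
        linarith
      · rw [if_neg h]
        exact Real.sqrt_pos.mpr (by positivity)
    have hInv : hrInv n r y = (g / ‖y‖) • y := by rw [hrInv, if_neg hy, hg]
    have hnInv : ‖hrInv n r y‖ = g := by
      rw [hInv, norm_smul, Real.norm_eq_abs, abs_of_pos (by positivity),
        div_mul_cancel₀ _ hny.ne']
    have hInvne : hrInv n r y ≠ 0 := by
      intro h
      rw [h, norm_zero] at hnInv
      exact hgpos.ne hnInv
    have hexp : r * Real.exp (tau' n (hrInv n r y)) = ‖y‖ := by
      rw [tau']
      by_cases h : r ≤ ‖y‖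
      · have hg1 : g = Real.log (‖y‖ / r) + 1 := by rw [hg, if_pos h]
        have h1g : 1 ≤ g := by
          rw [hg1]
          have : (0:ℝ) ≤ Real.log (‖y‖ / r) :=
            Real.log_nonneg ((one_le_div hrpos).mpr h)
          linarith
        rw [if_pos (hnInv ▸ h1g), hnInv, hg1]
        rw [show Real.log (‖y‖ / r) + 1 - 1 = Real.log (‖y‖ / r) by ring,
          Real.exp_log (by positivity)]
        field_simp
      · push_neg at h
        have hg1 : g = Real.sqrt (‖y‖ / r) := by rw [hg, if_neg (not_le.mpr h)]
        have hglt : g < 1 := by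
          rw [hg1]
          have : ‖y‖ / r < 1 := (div_lt_one hrpos).mpr h
          calc Real.sqrt (‖y‖ / r) < Real.sqrt 1 :=
                (Real.sqrt_lt_sqrt (by positivity) this)
            _ = 1 := Real.sqrt_one
        rw [if_neg (by rw [hnInv]; exact not_le.mpr hglt), hnInv, hg1,
          Real.sq_sqrt (by positivity), Real.exp_log (by positivity)]
        field_simp
    rw [hr, if_neg hInvne, hnInv, hexp, hInv, smul_smul,
      show ‖y‖ / g * (g / ‖y‖) = 1 by field_simp, one_smul]

end Aux

theorem hr_is_homeomorph (n : ℕ) (r : ℝ) (hrpos : 0 < r) :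
    ∃ H : Homeomorph (EuclideanSpace ℝ (Fin n)) (EuclideanSpace ℝ (Fin n)),
      ∀ x, H x = hr n r x := by
  refine ⟨⟨⟨hr n r, hrInv n r, left_inv hrpos, right_inv hrpos⟩,
    continuous_hr hrpos, continuous_hrInv hrpos⟩, fun x => rfl⟩
end

section
/- With h_r as defined (h_r(x) = r·e^{τ'(x)}x/‖x‖₂, τ'(x) = ‖x‖₂-1 for ‖x‖₂ ≥ 1, τ'(x) = ln(‖x‖₂²) for 0 < ‖x‖₂ < 1, h_r(0)=0), its inverse is h_r⁻¹(y) = α_r(y)·y/‖y‖₂ for y ≠ 0 and h_r⁻¹(0) = 0, where α_r(y) = ln(‖y‖₂/r) + 1 if ‖y‖₂ ≥ r and α_r(y) = (‖y‖₂/r)^{1/2} if ‖y‖₂ < r; that is, h_r ∘ h_r⁻¹ = id and h_r⁻¹ ∘ h_r = id on ℝⁿ. -/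
theorem hrInv_is_inverse (n : ℕ) (r : ℝ) (hrpos : 0 < r) :
    (∀ y : EuclideanSpace ℝ (Fin n), hr n r (hrInv n r y) = y) ∧
    (∀ x : EuclideanSpace ℝ (Fin n), hrInv n r (hr n r x) = x) := by
  constructor
  · intro y
    by_cases hy : y = 0
    · simp [hy, hrInv, hr]
    · have hN : (0:ℝ) < ‖y‖ := norm_pos_iff.mpr hy
      by_cases hc : r ≤ ‖y‖
      · set a := Real.log (‖y‖ / r) + 1 with ha_def
        have hlog : 0 ≤ Real.log (‖y‖ / r) :=
          Real.log_nonneg (by rw [le_div_iff₀ hrpos]; linarith)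
        have ha1 : 1 ≤ a := by simp [ha_def]; linarith
        have ha : 0 < a := by linarith
        have hv : hrInv n r y = (a / ‖y‖) • y := by simp [hrInv, hy, hc, ha_def]
        have hvne : hrInv n r y ≠ 0 := by
          rw [hv]; exact smul_ne_zero (by positivity) hy
        have hnv : ‖hrInv n r y‖ = a := by
          rw [hv, norm_smul, Real.norm_eq_abs, abs_of_pos (by positivity)]
          field_simp
        have htau : tau' n (hrInv n r y) = Real.log (‖y‖ / r) := by
          rw [tau', hnv, if_pos ha1]; ring
        rw [hr, if_neg hvne, htau, Real.exp_log (by positivity), hnv, hv, smul_smul]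
        have h1 : r * (‖y‖ / r) / a * (a / ‖y‖) = 1 := by field_simp
        rw [h1, one_smul]
      · set a := Real.sqrt (‖y‖ / r) with ha_def
        have ha : 0 < a := Real.sqrt_pos.mpr (by positivity)
        have ha1 : a < 1 := by
          rw [ha_def, show (1:ℝ) = Real.sqrt 1 by simp]
          exact Real.sqrt_lt_sqrt (by positivity) (by rw [div_lt_one hrpos]; linarith)
        have hv : hrInv n r y = (a / ‖y‖) • y := by
          rw [hrInv, if_neg hy, if_neg hc, ← ha_def]
        have hvne : hrInv n r y ≠ 0 := by
          rw [hv]; exact smul_ne_zero (by positivity) hy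
        have hnv : ‖hrInv n r y‖ = a := by
          rw [hv, norm_smul, Real.norm_eq_abs, abs_of_pos (by positivity)]
          field_simp
        have hsq : a ^ 2 = ‖y‖ / r := Real.sq_sqrt (by positivity)
        have htau : tau' n (hrInv n r y) = Real.log (a ^ 2) := by
          rw [tau', hnv, if_neg (by linarith)]
        rw [hr, if_neg hvne, htau, Real.exp_log (by positivity), hsq, hnv, hv, smul_smul]
        have h1 : r * (‖y‖ / r) / a * (a / ‖y‖) = 1 := by field_simp
        rw [h1, one_smul]
  · intro x
    by_cases hx : x = 0
    · simp [hx, hrInv, hr]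
    · have hM : (0:ℝ) < ‖x‖ := norm_pos_iff.mpr hx
      by_cases hc : 1 ≤ ‖x‖
      · have htau : tau' n x = ‖x‖ - 1 := by rw [tau', if_pos hc]
        have hE : (0:ℝ) < Real.exp (‖x‖ - 1) := Real.exp_pos _
        have hv : hr n r x = (r * Real.exp (‖x‖ - 1) / ‖x‖) • x := by
          rw [hr, if_neg hx, htau]
        have hvne : hr n r x ≠ 0 := by
          rw [hv]; exact smul_ne_zero (by positivity) hx
        have hnv : ‖hr n r x‖ = r * Real.exp (‖x‖ - 1) := by
          rw [hv, norm_smul, Real.norm_eq_abs, abs_of_pos (by positivity)]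
          field_simp
        have hge : r ≤ ‖hr n r x‖ := by
          rw [hnv]
          nlinarith [Real.one_le_exp (by linarith : (0:ℝ) ≤ ‖x‖ - 1)]
        have hα : Real.log (‖hr n r x‖ / r) + 1 = ‖x‖ := by
          rw [hnv, mul_comm r, mul_div_assoc, div_self (ne_of_gt hrpos), mul_one,
            Real.log_exp]; ring
        rw [hrInv, if_neg hvne, if_pos hge, hα, hnv, hv, smul_smul]
        have h1 : ‖x‖ / (r * Real.exp (‖x‖ - 1)) * (r * Real.exp (‖x‖ - 1) / ‖x‖) = 1 := by
          field_simp
        rw [h1, one_smul]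
      · push_neg at hc
        have htau : tau' n x = Real.log (‖x‖ ^ 2) := by rw [tau', if_neg (not_le.mpr hc)]
        have hE : Real.exp (tau' n x) = ‖x‖ ^ 2 := by
          rw [htau, Real.exp_log (by positivity)]
        have hv : hr n r x = (r * ‖x‖ ^ 2 / ‖x‖) • x := by
          rw [hr, if_neg hx, hE]
        have hvne : hr n r x ≠ 0 := by
          rw [hv]; exact smul_ne_zero (by positivity) hx
        have hnv : ‖hr n r x‖ = r * ‖x‖ ^ 2 := by
          rw [hv, norm_smul, Real.norm_eq_abs, abs_of_pos (by positivity)]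
          field_simp
        have hlt : ¬ r ≤ ‖hr n r x‖ := by
          rw [hnv]; push_neg
          have h2 : ‖x‖ ^ 2 < 1 := by nlinarith
          nlinarith
        have hα : Real.sqrt (‖hr n r x‖ / r) = ‖x‖ := by
          rw [hnv, mul_comm, mul_div_assoc, div_self (ne_of_gt hrpos), mul_one,
            Real.sqrt_sq hM.le]
        rw [hrInv, if_neg hvne, if_neg hlt, hα, hnv, hv, smul_smul]
        have h1 : ‖x‖ / (r * ‖x‖ ^ 2) * (r * ‖x‖ ^ 2 / ‖x‖) = 1 := by field_simp
        rw [h1, one_smul]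
end

section
/- Let r > 0 and let h_r be the homeomorphism h_r(x) = r·e^{τ'(x)}x/‖x‖₂ (with τ'(x) = ‖x‖₂-1 for ‖x‖₂ ≥ 1, τ'(x) = ln(‖x‖₂²) for 0 < ‖x‖₂ < 1, h_r(0)=0). Then for every y with ‖y‖₂ ≥ r and every t with 0 ≤ t ≤ ln(‖y‖₂/r), one has h_r(φ₁(t, h_r⁻¹(y))) = e^{-t}·y, where φ₁ is the semiflow of ẋ = -x/‖x‖₂. -/
theorem conjugacy_outside_ball (n : ℕ) (r : ℝ) (hrpos : 0 < r) :
    ∀ y : EuclideanSpace ℝ (Fin n), r ≤ ‖y‖ →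
      ∀ t : ℝ, 0 ≤ t → t ≤ Real.log (‖y‖ / r) →
        hr n r (phi1 n t (hrInv n r y)) = Real.exp (-t) • y := by
  intro y hy t ht0 htL
  have hy0 : y ≠ 0 := by
    intro h; rw [h, norm_zero] at hy; linarith
  have hyn : 0 < ‖y‖ := lt_of_lt_of_le hrpos hy
  set L := Real.log (‖y‖ / r) with hL
  have hL0 : 0 ≤ L := Real.log_nonneg (by rw [le_div_iff₀ hrpos]; linarith)
  have hexpL : Real.exp L = ‖y‖ / r := Real.exp_log (by positivity)
  have hx : hrInv n r y = ((L + 1) / ‖y‖) • y := by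
    rw [hrInv, if_neg hy0, if_pos hy]
  have hc1 : (0:ℝ) < (L + 1) / ‖y‖ := by positivity
  have hxn : ‖hrInv n r y‖ = L + 1 := by
    rw [hx, norm_smul, Real.norm_eq_abs, abs_of_pos hc1, div_mul_cancel₀ _ hyn.ne']
  have hphi : phi1 n t (hrInv n r y) = ((L + 1 - t) / ‖y‖) • y := by
    rw [phi1, if_pos (by rw [hxn]; linarith), hxn, hx, smul_smul]
    congr 1
    field_simp
  have hc2 : (0:ℝ) < (L + 1 - t) / ‖y‖ := div_pos (by linarith) hyn
  have hzn : ‖phi1 n t (hrInv n r y)‖ = L + 1 - t := by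
    rw [hphi, norm_smul, Real.norm_eq_abs, abs_of_pos hc2, div_mul_cancel₀ _ hyn.ne']
  have hz0 : phi1 n t (hrInv n r y) ≠ 0 := by
    intro h; rw [h, norm_zero] at hzn; linarith
  rw [hr, if_neg hz0, tau', if_pos (by rw [hzn]; linarith), hzn, hphi, smul_smul]
  congr 1
  have h1 : L + 1 - t ≠ 0 := ne_of_gt (by linarith)
  rw [show L + 1 - t - 1 = L + (-t) by ring, Real.exp_add, hexpL]
  field_simp
end

section
/- Let r > 0 and h_r as in the explicit linearization of the semiflow φ₁ of ẋ = -x/‖x‖₂. Then for every y with 0 < ‖y‖₂ < r and every t with 0 ≤ t ≤ √(‖y‖₂/r), one has h_r(φ₁(t, h_r⁻¹(y))) = r·(√(‖y‖₂/r) - t)²·y/‖y‖₂. -/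
theorem conjugacy_inside_ball (n : ℕ) (r : ℝ) (hrpos : 0 < r) :
    ∀ y : EuclideanSpace ℝ (Fin n), 0 < ‖y‖ → ‖y‖ < r →
      ∀ t : ℝ, 0 ≤ t → t ≤ Real.sqrt (‖y‖ / r) →
        hr n r (phi1 n t (hrInv n r y)) =
          (r * (Real.sqrt (‖y‖ / r) - t) ^ 2 / ‖y‖) • y := by
  intro y hy hyr t ht hts
  have hy0 : y ≠ 0 := fun h => by simp [h] at hy
  set s := Real.sqrt (‖y‖ / r) with hs
  have hspos : 0 < s := Real.sqrt_pos.mpr (div_pos hy hrpos)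
  have hslt1 : s < 1 := by
    rw [hs, show (1:ℝ) = Real.sqrt 1 by simp]
    exact Real.sqrt_lt_sqrt (by positivity) ((div_lt_one hrpos).mpr hyr)
  have hnotr : ¬ r ≤ ‖y‖ := not_le.mpr hyr
  have hinv : hrInv n r y = (s / ‖y‖) • y := by
    simp [hrInv, hy0, hnotr, hs]
  have hninv : ‖hrInv n r y‖ = s := by
    rw [hinv, norm_smul, Real.norm_eq_abs, abs_of_pos (div_pos hspos hy),
      div_mul_cancel₀ _ (ne_of_gt hy)]
  have hphi : phi1 n t (hrInv n r y) = ((s - t) / ‖y‖) • y := by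
    rw [phi1, hninv, if_pos hts, hinv, smul_smul]
    congr 1
    field_simp
  rw [hphi]
  rcases eq_or_lt_of_le hts with heq | hlt
  · rw [heq]
    simp [hr]
  · have hst : 0 < s - t := sub_pos.mpr hlt
    have hxne : ((s - t) / ‖y‖) • y ≠ 0 := by
      simp [smul_eq_zero, hy0, div_eq_zero_iff, ne_of_gt hst, ne_of_gt hy]
    have hnx : ‖((s - t) / ‖y‖) • y‖ = s - t := by
      rw [norm_smul, Real.norm_eq_abs, abs_of_pos (div_pos hst hy),
        div_mul_cancel₀ _ (ne_of_gt hy)]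
    have hlt1 : ‖((s - t) / ‖y‖) • y‖ < 1 := by
      rw [hnx]; linarith
    have htau : tau' n (((s - t) / ‖y‖) • y) = Real.log ((s - t) ^ 2) := by
      rw [tau', if_neg (not_le.mpr hlt1), hnx]
    rw [hr, if_neg hxne, htau, Real.exp_log (by positivity), hnx, smul_smul]
    congr 1
    field_simp
end

section
/- Let r > 0 and h_r be the explicit linearizing homeomorphism for the semiflow φ₁ of ẋ = -x/‖x‖₂ (with level-set choice ε = ½ so that h_r⁻¹ maps r·𝕊^{n-1} onto 𝕊^{n-1}). Then for every x with ‖x‖₂ ≥ 1 and every t with 0 ≤ t ≤ τ'(x) = ‖x‖₂ - 1, one has h_r⁻¹(e^{-t}·h_r(x)) = φ₁(t, x). -/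
theorem reverse_conjugacy_outside_unit_ball (n : ℕ) (r : ℝ) (hrpos : 0 < r) :
    ∀ x : EuclideanSpace ℝ (Fin n), 1 ≤ ‖x‖ →
      ∀ t : ℝ, 0 ≤ t → t ≤ ‖x‖ - 1 →
        hrInv n r (Real.exp (-t) • hr n r x) = phi1 n t x := by
  intro x hx t ht ht'
  have hxpos : (0:ℝ) < ‖x‖ := lt_of_lt_of_le one_pos hx
  have hx0 : x ≠ 0 := fun h => by simp [h] at hxpos
  have htau : tau' n x = ‖x‖ - 1 := by simp [tau', hx]
  set c : ℝ := r * Real.exp (‖x‖ - 1) / ‖x‖ with hc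
  have hcpos : 0 < c := by positivity
  have hhr : hr n r x = c • x := by simp [hr, hx0, htau, hc]
  have hy : Real.exp (-t) • hr n r x = (Real.exp (-t) * c) • x := by
    rw [hhr, smul_smul]
  have hkpos : 0 < Real.exp (-t) * c := by positivity
  have hny : ‖Real.exp (-t) • hr n r x‖ = r * Real.exp (‖x‖ - 1 - t) := by
    rw [hy, norm_smul, Real.norm_eq_abs, abs_of_pos hkpos, hc]
    field_simp [hxpos.ne']
    rw [show ‖x‖ - 1 - t = -t + (‖x‖ - 1) by ring, Real.exp_add]
  have hy0 : Real.exp (-t) • hr n r x ≠ 0 := by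
    intro h
    rw [h, norm_zero] at hny
    have : 0 < r * Real.exp (‖x‖ - 1 - t) := by positivity
    linarith
  have hr_le : r ≤ ‖Real.exp (-t) • hr n r x‖ := by
    rw [hny]
    nlinarith [Real.one_le_exp (by linarith : (0:ℝ) ≤ ‖x‖ - 1 - t)]
  rw [hrInv, if_neg hy0, if_pos hr_le, hny, hy]
  have hlog : Real.log (r * Real.exp (‖x‖ - 1 - t) / r) + 1 = ‖x‖ - t := by
    have h1 : r * Real.exp (‖x‖ - 1 - t) / r = Real.exp (‖x‖ - 1 - t) := by
      field_simp
    rw [h1, Real.log_exp]; ring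
  rw [hlog, smul_smul]
  have hphi : phi1 n t x = (1 - t / ‖x‖) • x := by
    rw [phi1, if_pos (by linarith)]
  rw [hphi]
  congr 1
  field_simp
  rw [hc, show ‖x‖ - 1 - t = -t + (‖x‖ - 1) by ring, Real.exp_add]
  field_simp
end

section
/- For the planar vector field X₀(x₁,x₂) = (-x₁, -x₂/(|x₂| + x₁²)) for (x₁,x₂) ≠ (0,0) and X₀(0,0) = (0,0), the function V(x₁,x₂) = x₁² + x₂² is strictly decreasing along the vector field away from the origin: ⟨∇V(x), X₀(x)⟩ = -2x₁² - 2x₂²/(|x₂| + x₁²) < 0 for all x ≠ 0. -/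
theorem X0_lyapunov_decrease (x : ℝ × ℝ) (hx : x ≠ 0) :
    (2 * x.1) * (-x.1) + (2 * x.2) * (-x.2 / (|x.2| + x.1 ^ 2)) =
      -2 * x.1 ^ 2 - 2 * x.2 ^ 2 / (|x.2| + x.1 ^ 2) ∧
    -2 * x.1 ^ 2 - 2 * x.2 ^ 2 / (|x.2| + x.1 ^ 2) < 0 := by
  constructor
  · ring
  · have h : x.1 ≠ 0 ∨ x.2 ≠ 0 := by
      by_contra h
      push_neg at h
      exact hx (Prod.ext h.1 h.2)
    rcases h with h1 | h2
    · have hd : 0 ≤ |x.2| + x.1 ^ 2 := by positivity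
      have : 0 ≤ 2 * x.2 ^ 2 / (|x.2| + x.1 ^ 2) := by positivity
      nlinarith [pow_pos (abs_pos.mpr h1) 2, sq_abs x.1]
    · have hd : 0 < |x.2| + x.1 ^ 2 := by positivity
      have : 0 < 2 * x.2 ^ 2 / (|x.2| + x.1 ^ 2) := by positivity
      nlinarith [sq_nonneg x.1]
end

section
/- For the planar system ẋ₁ = -x₁, ẋ₂ = -x₂/(|x₂| + x₁²), the time-to-origin function T⁺(x) = inf{t ≥ 0 : φ(t,x) = 0} is discontinuous at every point (0, x₂) with x₂ ≠ 0: T⁺(0,x₂) = |x₂|, but for points (x₁, x₂) with x₁ ≠ 0 the solution never reaches the origin in finite time, so T⁺(x₁,x₂) = +∞. -/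
theorem time_to_origin_discontinuous :
    (∀ x₂ : ℝ, x₂ ≠ 0 →
      ∃ c : ℝ → ℝ × ℝ,
        c 0 = (0, x₂) ∧
        (∀ t : ℝ, 0 ≤ t → t ≠ |x₂| →
          HasDerivAt c (-(c t).1, -(c t).2 / (|(c t).2| + (c t).1 ^ 2)) t) ∧
        (∀ t : ℝ, 0 ≤ t → t < |x₂| → c t ≠ 0) ∧
        (∀ t : ℝ, |x₂| ≤ t → c t = 0) ∧
        sInf {t : ℝ | 0 ≤ t ∧ c t = 0} = |x₂|) ∧
    (∀ x₁ x₂ : ℝ, x₁ ≠ 0 → ∀ c : ℝ → ℝ × ℝ,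
      c 0 = (x₁, x₂) →
      (∀ t : ℝ, 0 ≤ t → HasDerivAt (fun s => (c s).1) (-(c t).1) t) →
      {t : ℝ | 0 ≤ t ∧ c t = 0} = ∅) := by
  constructor
  · intro x₂ hx₂
    set a := |x₂| with ha
    have ha0 : 0 < a := abs_pos.mpr hx₂
    set s := Real.sign x₂ with hs
    have hs1 : |s| = 1 := by
      rcases hx₂.lt_or_gt with h | h
      · simp [hs, Real.sign_of_neg h]
      · simp [hs, Real.sign_of_pos h]
    have hsne : s ≠ 0 := by
      intro h; rw [h] at hs1; simp at hs1
    refine ⟨fun t => (0, s * max (a - t) 0), ?_, ?_, ?_, ?_, ?_⟩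
    · have : max (a - 0) 0 = a := by rw [sub_zero]; exact max_eq_left ha0.le
      simp only [this]
      have hsx : s * a = x₂ := by
        rcases hx₂.lt_or_gt with h | h
        · rw [hs, ha, Real.sign_of_neg h, abs_of_neg h]; ring
        · rw [hs, ha, Real.sign_of_pos h, abs_of_pos h]; ring
      rw [hsx]
    · intro t ht htne
      rcases lt_or_gt_of_ne (fun h => htne h) with hlt | hgt
      · -- t < a
        have h1 : HasDerivAt (fun _ : ℝ => (0 : ℝ)) 0 t := hasDerivAt_const t 0
        have h2 : HasDerivAt (fun u : ℝ => s * (a - u)) (-s) t := by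
          have := ((hasDerivAt_id t).const_sub a).const_mul s
          simpa using this
        have hev : (fun u : ℝ => s * max (a - u) 0) =ᶠ[nhds t] fun u => s * (a - u) := by
          filter_upwards [Iio_mem_nhds hlt] with u hu
          rw [max_eq_left (by linarith [Set.mem_Iio.mp hu])]
        have h3 : HasDerivAt (fun u : ℝ => s * max (a - u) 0) (-s) t :=
          h2.congr_of_eventuallyEq hev
        have hmax : max (a - t) 0 = a - t := max_eq_left (by linarith)
        have hval : ((-(0 : ℝ), -(s * max (a - t) 0) / (|s * max (a - t) 0| + (0:ℝ) ^ 2)) : ℝ × ℝ)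
            = (0, -s) := by
          rw [hmax]
          have hpos : (0:ℝ) < a - t := by linarith
          have habs : |s * (a - t)| = a - t := by
            rw [abs_mul, hs1, one_mul, abs_of_pos hpos]
          rw [habs]
          refine Prod.ext (by simp) ?_
          field_simp
          ring
        rw [show (-(((fun t : ℝ => ((0:ℝ), s * max (a - t) 0)) t).1),
            -(((fun t : ℝ => ((0:ℝ), s * max (a - t) 0)) t).2) /
              (|((fun t : ℝ => ((0:ℝ), s * max (a - t) 0)) t).2| +
               ((fun t : ℝ => ((0:ℝ), s * max (a - t) 0)) t).1 ^ 2)) =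
            ((0:ℝ), -s) from hval]
        exact h1.prodMk h3
      · -- t > a
        have hev : (fun u : ℝ => s * max (a - u) 0) =ᶠ[nhds t] fun _ => (0:ℝ) := by
          filter_upwards [Ioi_mem_nhds hgt] with u hu
          rw [max_eq_right (by linarith [Set.mem_Ioi.mp hu])]
          ring
        have h3 : HasDerivAt (fun u : ℝ => s * max (a - u) 0) 0 t :=
          (hasDerivAt_const t (0:ℝ)).congr_of_eventuallyEq hev
        have hmax : max (a - t) 0 = 0 := max_eq_right (by linarith)
        have hval : ((-(0 : ℝ), -(s * max (a - t) 0) / (|s * max (a - t) 0| + (0:ℝ) ^ 2)) : ℝ × ℝ)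
            = (0, 0) := by
          rw [hmax]; simp
        rw [show (-(((fun t : ℝ => ((0:ℝ), s * max (a - t) 0)) t).1),
            -(((fun t : ℝ => ((0:ℝ), s * max (a - t) 0)) t).2) /
              (|((fun t : ℝ => ((0:ℝ), s * max (a - t) 0)) t).2| +
               ((fun t : ℝ => ((0:ℝ), s * max (a - t) 0)) t).1 ^ 2)) =
            ((0:ℝ), 0) from hval]
        exact (hasDerivAt_const t (0:ℝ)).prodMk h3
    · intro t ht hlt h
      have h2 : s * max (a - t) 0 = 0 := by
        have := congrArg Prod.snd h
        simpa using this
      rw [max_eq_left (by linarith)] at h2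
      rcases mul_eq_zero.mp h2 with h' | h'
      · exact hsne h'
      · linarith
    · intro t hta
      have : max (a - t) 0 = 0 := max_eq_right (by linarith)
      simp [this, Prod.ext_iff]
    · have hset : {t : ℝ | 0 ≤ t ∧ ((fun t : ℝ => ((0:ℝ), s * max (a - t) 0)) t) = 0}
          = Set.Ici a := by
        ext t
        simp only [Set.mem_setOf_eq, Set.mem_Ici]
        constructor
        · rintro ⟨ht0, h⟩
          have h2 : s * max (a - t) 0 = 0 := by simpa using congrArg Prod.snd h
          rcases mul_eq_zero.mp h2 with h' | h'
          · exact absurd h' hsne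
          · by_contra hlt
            push_neg at hlt
            rw [max_eq_left (by linarith)] at h'
            linarith
        · intro hat
          refine ⟨le_trans ha0.le hat, ?_⟩
          have : max (a - t) 0 = 0 := max_eq_right (by linarith)
          simp [this, Prod.ext_iff]
      rw [hset, csInf_Ici]
  · intro x₁ x₂ hx₁ c hc0 hderiv
    have key : ∀ t : ℝ, 0 ≤ t → (c t).1 ≠ 0 := by
      intro t ht
      set g : ℝ → ℝ := fun u => (c u).1 * Real.exp u with hg
      have hcont : ContinuousOn g (Set.Icc 0 t) := by
        intro u hu
        exact ((hderiv u hu.1).continuousAt.mul (Real.continuous_exp.continuousAt)).continuousWithinAt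
      have hderiv0 : ∀ u ∈ Set.Ico (0:ℝ) t, HasDerivWithinAt g 0 (Set.Ici u) u := by
        intro u hu
        have h := (hderiv u hu.1).mul (Real.hasDerivAt_exp u)
        have : -(c u).1 * Real.exp u + (c u).1 * Real.exp u = 0 := by ring
        rw [this] at h
        exact h.hasDerivWithinAt
      have hconst := constant_of_has_deriv_right_zero hcont hderiv0 t (Set.right_mem_Icc.mpr ht)
      have hg0 : g 0 = x₁ := by simp [hg, hc0]
      rw [hg0] at hconst
      intro hz
      have h2 : (c t).1 * Real.exp t = x₁ := hconst
      rw [hz, zero_mul] at h2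
      exact hx₁ h2.symm
    rw [Set.eq_empty_iff_forall_notMem]
    rintro t ⟨ht, hct⟩
    exact key t ht (by rw [hct]; rfl)
end

section
/- Let φ be a semiflow on a topological space M with an asymptotically stable fixed point x* with basin B(x*) and a continuous Lyapunov function V : B(x*) → ℝ≥0 that is zero only at x* and strictly decreasing along nonconstant trajectories. For ε > 0 let U_ε = V⁻¹([0,ε)) and L_ε = V⁻¹(ε). Then the first hitting time T⁺_ε(x) = inf{t ≥ 0 : φ(t,x) ∈ L_ε} is finite for every x ∈ B(x*) \ U_ε, and T⁺_ε(x) = 0 if and only if x ∈ L_ε. -/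
theorem hitting_time_finite_and_zero_iff
    {M : Type*} [TopologicalSpace M]
    (φ : ℝ → M → M)
    (hφcont : ContinuousOn (fun p : ℝ × M => φ p.1 p.2) (Set.Ici (0 : ℝ) ×ˢ Set.univ))
    (hφ0 : ∀ x, φ 0 x = x)
    (hφadd : ∀ s t : ℝ, 0 ≤ s → 0 ≤ t → ∀ x, φ s (φ t x) = φ (s + t) x)
    (xstar : M) (hfix : ∀ t : ℝ, 0 ≤ t → φ t xstar = xstar)
    (B : Set M) (hxB : xstar ∈ B) (hBopen : IsOpen B)
    (hBinv : ∀ x ∈ B, ∀ t : ℝ, 0 ≤ t → φ t x ∈ B)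
    (V : M → ℝ)
    (hVcont : ContinuousOn V B)
    (hVnonneg : ∀ x ∈ B, 0 ≤ V x)
    (hVzero : ∀ x ∈ B, V x = 0 ↔ x = xstar)
    (hVdec : ∀ x ∈ B, x ≠ xstar → ∀ t : ℝ, 0 < t → V (φ t x) < V x)
    (hstable : ∀ U ∈ nhds xstar, ∃ W ∈ nhds xstar, ∀ x ∈ W ∩ B, ∀ t : ℝ, 0 ≤ t → φ t x ∈ U)
    (hattr : ∀ x ∈ B, Filter.Tendsto (fun t : ℝ => φ t x) Filter.atTop (nhds xstar))
    (ε : ℝ) (hε : 0 < ε) :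
    ∀ x ∈ B, ε ≤ V x →
      {t : ℝ | 0 ≤ t ∧ V (φ t x) = ε}.Nonempty ∧
      (sInf {t : ℝ | 0 ≤ t ∧ V (φ t x) = ε} = 0 ↔ V x = ε) := by

  intro x hx hεx
  have hfB : ∀ t : ℝ, 0 ≤ t → φ t x ∈ B := fun t ht => hBinv x hx t ht
  have hfcont : ContinuousOn (fun t => V (φ t x)) (Set.Ici (0:ℝ)) := by
    apply hVcont.comp
    · exact hφcont.comp ((continuous_id.prodMk continuous_const).continuousOn)
        (fun t ht => ⟨ht, trivial⟩)
    · exact fun t ht => hfB t ht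
  have hf0 : V (φ 0 x) = V x := by rw [hφ0]
  have hVstar : V xstar = 0 := (hVzero xstar hxB).mpr rfl
  have hlim : Filter.Tendsto (fun t : ℝ => V (φ t x)) Filter.atTop (nhds 0) := by
    have := ((hVcont.continuousAt (hBopen.mem_nhds hxB)).tendsto).comp (hattr x hx)
    rwa [hVstar] at this
  obtain ⟨T, hT⟩ := (Filter.eventually_atTop).1 ((tendsto_order.1 hlim).2 ε hε)
  have hT'0 : (0:ℝ) ≤ max T 0 := le_max_right _ _
  have hfT' : V (φ (max T 0) x) < ε := hT _ (le_max_left _ _)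
  have hmem : ε ∈ Set.Icc (V (φ (max T 0) x)) (V (φ 0 x)) := ⟨le_of_lt hfT', by rw [hf0]; exact hεx⟩
  obtain ⟨t0, ht0mem, ht0⟩ := intermediate_value_Icc' hT'0
    (hfcont.mono (Set.Icc_subset_Ici_self)) hmem
  have hne : {t : ℝ | 0 ≤ t ∧ V (φ t x) = ε}.Nonempty := ⟨t0, ht0mem.1, ht0⟩
  refine ⟨hne, ?_, ?_⟩
  · intro hinf
    by_contra hVx
    have hlt : ε < V x := lt_of_le_of_ne hεx (fun h => hVx h.symm)
    have hcw : ContinuousWithinAt (fun t => V (φ t x)) (Set.Ici 0) 0 :=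
      hfcont 0 Set.self_mem_Ici
    have hev : ∀ᶠ t in nhdsWithin 0 (Set.Ici 0), ε < V (φ t x) := by
      have := (tendsto_order.1 hcw).1 ε (by simpa [hf0] using hlt)
      exact this
    obtain ⟨u, hu, hsub⟩ := (mem_nhdsGE_iff_exists_Ico_subset).1 hev
    have hu0 : (0:ℝ) < u := hu
    have hbound : ∀ t ∈ {t : ℝ | 0 ≤ t ∧ V (φ t x) = ε}, u ≤ t := by
      intro t ht
      by_contra hlt'
      push_neg at hlt'
      have : ε < V (φ t x) := hsub ⟨ht.1, hlt'⟩
      rw [ht.2] at this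
      exact lt_irrefl _ this
    have : u ≤ sInf {t : ℝ | 0 ≤ t ∧ V (φ t x) = ε} := le_csInf hne hbound
    rw [hinf] at this
    exact absurd this (not_le.2 hu0)
  · intro hVx
    have h0mem : (0:ℝ) ∈ {t : ℝ | 0 ≤ t ∧ V (φ t x) = ε} := ⟨le_refl 0, by rw [hf0, hVx]⟩
    refine le_antisymm (csInf_le ⟨0, fun y hy => hy.1⟩ h0mem)
      (le_csInf hne fun y hy => hy.1)
end
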